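/- Let X be a uniformly convex Banach space, Ω, Δ nonempty, closed and convex subsets of X, and Ξ : X → X a cyclic orbital contraction on Ω ∪ Δ with constant η ∈ (0,1). Then Ξ has a best proximity point ς* ∈ Ω, i.e., there exists ς* ∈ Ω with ‖ς* − Ξς*‖ = dist(Ω,Δ). -/

import Mathlib

/-!
A pair `(P, Q)` with `P ⊆ Ω`, `Q ⊆ Δ` that `Ξ` swaps is a cyclic pair. For `p ∈ P`, `q ∈ Q`
every distance in the orbital spread of `(p, q)` is a distance between `P` and `Q`, so the
contraction inequality bounds all distances between the closures of `Ξ '' Q` and `Ξ '' P` by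
`η · supDist P Q + (1 - η) d`. Along a sequence of cyclic pairs, each lying in these closures for
its predecessor, `supDist` therefore decays geometrically to `d = dist(Ω, Δ)`.

For the tails of the even and odd iterates of `x ∈ Ω`, far-out even iterates are all almost at
distance `d` from one common odd iterate; uniform convexity and convexity of `Ω` force them close
together, so `Ξ^[2n] x` converges to some `z ∈ Ω`. Adjoining the orbit of `z` to these tails
(`z` is only a limit point, hence the closures) gives cyclic pairs whose `supDist` bounds
`‖z - Ξ z‖` and tends to `d`.
-/

open Filter Metric Set Function Bornology

section CyclicMaps

variable {α : Type*} {f : α → α} {s t : Set α} {x y : α}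

theorem Set.MapsTo.iterate_two_mul (hst : MapsTo f s t) (hts : MapsTo f t s) (k : ℕ) :
    MapsTo f^[2 * k] s s := by
  rw [iterate_mul]
  exact (hts.comp hst).iterate k

theorem Set.MapsTo.iterate_mem_of_even (hst : MapsTo f s t) (hts : MapsTo f t s) (hx : x ∈ s)
    {n : ℕ} (hn : Even n) : f^[n] x ∈ s := by
  obtain ⟨k, rfl⟩ := hn
  rw [← two_mul]
  exact hst.iterate_two_mul hts k hx

theorem Set.MapsTo.iterate_mem_of_odd (hst : MapsTo f s t) (hts : MapsTo f t s) (hx : x ∈ s)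
    {n : ℕ} (hn : Odd n) : f^[n] x ∈ t := by
  obtain ⟨k, rfl⟩ := hn
  rw [add_comm, iterate_add_apply]
  exact hst (hst.iterate_two_mul hts k hx)

theorem Set.MapsTo.iterate_mem_of_odd_sub (hst : MapsTo f s t) (hts : MapsTo f t s) (hx : x ∈ s)
    {i j : ℕ} (hij : Odd ((i : ℤ) - j)) :
    (f^[i] x ∈ s ∧ f^[j] x ∈ t) ∨ (f^[i] x ∈ t ∧ f^[j] x ∈ s) := by
  rcases Nat.even_or_odd i with hi | hi
  · have hj : Odd j := by
      rw [Int.odd_sub'] at hij; exact_mod_cast hij.2 (by exact_mod_cast hi)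
    exact .inl ⟨hst.iterate_mem_of_even hts hx hi, hst.iterate_mem_of_odd hts hx hj⟩
  · have hj : Even j := by
      rw [Int.odd_sub] at hij; exact_mod_cast hij.1 (by exact_mod_cast hi)
    exact .inr ⟨hst.iterate_mem_of_odd hts hx hi, hst.iterate_mem_of_even hts hx hj⟩

theorem Set.MapsTo.iterate_mem_of_even_sub (hst : MapsTo f s t) (hts : MapsTo f t s) (hx : x ∈ s)
    (hy : y ∈ t) {i j : ℕ} (hij : Even ((i : ℤ) - j)) :
    (f^[i] x ∈ s ∧ f^[j] y ∈ t) ∨ (f^[i] x ∈ t ∧ f^[j] y ∈ s) := by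
  rcases Nat.even_or_odd i with hi | hi
  · have hj : Even j := by
      rw [Int.even_sub] at hij; exact_mod_cast hij.1 (by exact_mod_cast hi)
    exact .inl ⟨hst.iterate_mem_of_even hts hx hi, hts.iterate_mem_of_even hst hy hj⟩
  · have hj : Odd j := by
      rw [Int.even_sub'] at hij; exact_mod_cast hij.1 (by exact_mod_cast hi)
    exact .inr ⟨hst.iterate_mem_of_odd hts hx hi, hts.iterate_mem_of_odd hst hy hj⟩

structure IsCyclicPair (Ω Δ : Set α) (f : α → α) (P Q : Set α) : Prop where
  subset_fst : P ⊆ Ω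
  subset_snd : Q ⊆ Δ
  mapsTo_fst : MapsTo f P Q
  mapsTo_snd : MapsTo f Q P

theorem IsCyclicPair.union {Ω Δ P Q P' Q' : Set α} (h : IsCyclicPair Ω Δ f P Q)
    (h' : IsCyclicPair Ω Δ f P' Q') : IsCyclicPair Ω Δ f (P ∪ P') (Q ∪ Q') where
  subset_fst := union_subset h.subset_fst h'.subset_fst
  subset_snd := union_subset h.subset_snd h'.subset_snd
  mapsTo_fst := h.mapsTo_fst.union_union h'.mapsTo_fst
  mapsTo_snd := h.mapsTo_snd.union_union h'.mapsTo_snd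

end CyclicMaps

section Orbit

variable {α : Type*} {f : α → α} {x : α}

def evenOrbit (f : α → α) (x : α) : Set α := range fun k => f^[2 * k] x

def oddOrbit (f : α → α) (x : α) : Set α := range fun k => f^[2 * k + 1] x

theorem self_mem_evenOrbit : x ∈ evenOrbit f x := ⟨0, rfl⟩

theorem apply_mem_oddOrbit : f x ∈ oddOrbit f x := ⟨0, rfl⟩

theorem iterate_iterate_eq {m n k : ℕ} (h : m + n = k) : f^[m] (f^[n] x) = f^[k] x := by
  rw [← iterate_add_apply, h]

theorem apply_iterate_eq {n k : ℕ} (h : n + 1 = k) : f (f^[n] x) = f^[k] x := by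
  rw [← iterate_succ_apply' f n x, ← h]

theorem iterate_two_mul_succ (n : ℕ) : f^[2 * (n + 1)] x = f^[2] (f^[2 * n] x) :=
  (iterate_iterate_eq (by ring)).symm

theorem iterate_two_mul_mem_evenOrbit {m n : ℕ} (h : n ≤ m) :
    f^[2 * m] x ∈ evenOrbit f (f^[2 * n] x) :=
  ⟨m - n, iterate_iterate_eq (by omega)⟩

theorem oddOrbit_subset_image_evenOrbit : oddOrbit f x ⊆ f '' evenOrbit f x := by
  rintro _ ⟨k, rfl⟩
  exact ⟨_, ⟨k, rfl⟩, apply_iterate_eq rfl⟩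

theorem evenOrbit_iterate_two_subset_image_oddOrbit :
    evenOrbit f (f^[2] x) ⊆ f '' oddOrbit f x := by
  rintro _ ⟨k, rfl⟩
  exact ⟨_, ⟨k, rfl⟩, (apply_iterate_eq rfl).trans (iterate_iterate_eq (by ring)).symm⟩

theorem oddOrbit_iterate_two_subset_image_evenOrbit :
    oddOrbit f (f^[2] x) ⊆ f '' evenOrbit f x := by
  rintro _ ⟨k, rfl⟩
  exact ⟨_, ⟨k + 1, rfl⟩, (apply_iterate_eq rfl).trans (iterate_iterate_eq (by ring)).symm⟩

theorem evenOrbit_subset_insert : evenOrbit f x ⊆ insert x (evenOrbit f (f^[2] x)) := by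
  rintro _ ⟨_ | k, rfl⟩
  · exact mem_insert x _
  · exact mem_insert_of_mem x ⟨k, iterate_iterate_eq (by ring)⟩

theorem isCyclicPair_orbit {Ω Δ : Set α} (hΩ : MapsTo f Ω Δ) (hΔ : MapsTo f Δ Ω) (hx : x ∈ Ω) :
    IsCyclicPair Ω Δ f (evenOrbit f x) (oddOrbit f x) where
  subset_fst := by
    rintro _ ⟨k, rfl⟩
    exact hΩ.iterate_two_mul hΔ k hx
  subset_snd := by
    rintro _ ⟨k, rfl⟩
    exact hΩ.iterate_mem_of_odd hΔ hx (odd_two_mul_add_one k)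
  mapsTo_fst := by
    rintro _ ⟨k, rfl⟩
    exact ⟨k, (apply_iterate_eq rfl).symm⟩
  mapsTo_snd := by
    rintro _ ⟨k, rfl⟩
    exact ⟨k + 1, (apply_iterate_eq (by ring)).symm⟩

end Orbit

section Spread

variable {X : Type*} [SeminormedAddCommGroup X]

noncomputable def supDist (P Q : Set X) : ℝ := sSup (image2 (fun p q => ‖p - q‖) P Q)

noncomputable def setDist (P Q : Set X) : ℝ := sInf (image2 (fun p q => ‖p - q‖) P Q)

theorem setDist_nonneg (P Q : Set X) : 0 ≤ setDist P Q :=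
  Real.sInf_nonneg <| forall_mem_image2.2 fun _ _ _ _ => norm_nonneg _

theorem setDist_le_norm_sub {P Q : Set X} {p q : X} (hp : p ∈ P) (hq : q ∈ Q) :
    setDist P Q ≤ ‖p - q‖ :=
  csInf_le ⟨0, forall_mem_image2.2 fun _ _ _ _ => norm_nonneg _⟩ (mem_image2_of_mem hp hq)

theorem bddAbove_image2_norm_sub {P Q : Set X} (hP : IsBounded P) (hQ : IsBounded Q) :
    BddAbove (image2 (fun p q => ‖p - q‖) P Q) := by
  obtain ⟨C, hC⟩ := isBounded_iff.1 (hP.union hQ)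
  exact ⟨C, forall_mem_image2.2 fun p hp q hq => by
    simpa [dist_eq_norm] using hC (mem_union_left Q hp) (mem_union_right P hq)⟩

theorem norm_sub_le_supDist {P Q : Set X} (hP : IsBounded P) (hQ : IsBounded Q) {p q : X}
    (hp : p ∈ P) (hq : q ∈ Q) : ‖p - q‖ ≤ supDist P Q :=
  le_csSup (bddAbove_image2_norm_sub hP hQ) (mem_image2_of_mem hp hq)

end Spread

section Contraction

variable {X : Type*} [SeminormedAddCommGroup X]

def orbitalSpread (Ξ : X → X) (ς ϑ : X) : Set ℝ :=
  { r : ℝ |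
    (∃ i j : ℕ, Odd ((i : ℤ) - j) ∧ r = ‖Ξ^[i] ς - Ξ^[j] ς‖) ∨
    (∃ k l : ℕ, Odd ((k : ℤ) - l) ∧ r = ‖Ξ^[k] ϑ - Ξ^[l] ϑ‖) ∨
    (∃ p q : ℕ, Even ((p : ℤ) - q) ∧ r = ‖Ξ^[p] ς - Ξ^[q] ϑ‖) }

structure IsCyclicOrbitalContraction (Ω Δ : Set X) (Ξ : X → X) (η : ℝ) : Prop where
  mem_Ioo : η ∈ Ioo 0 1
  mapsTo_fst : MapsTo Ξ Ω Δ
  mapsTo_snd : MapsTo Ξ Δ Ω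
  isBounded_orbit : ∀ x, IsBounded (range fun n => Ξ^[n] x)
  norm_sub_le : ∀ ς ∈ Ω, ∀ ϑ ∈ Δ,
    ‖Ξ ς - Ξ ϑ‖ ≤ η * sSup (orbitalSpread Ξ ς ϑ) + (1 - η) * setDist Ω Δ

variable {Ω Δ P Q : Set X} {Ξ : X → X} {η : ℝ}

theorem orbitalSpread_nonempty (Ξ : X → X) (ς ϑ : X) : (orbitalSpread Ξ ς ϑ).Nonempty :=
  ⟨_, .inl ⟨1, 0, by decide, rfl⟩⟩

theorem orbitalSpread_subset_image2 (hPQ : MapsTo Ξ P Q) (hQP : MapsTo Ξ Q P) {ς ϑ : X}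
    (hς : ς ∈ P) (hϑ : ϑ ∈ Q) :
    orbitalSpread Ξ ς ϑ ⊆ image2 (fun p q => ‖p - q‖) P Q := by
  have hmem : ∀ a b, (a ∈ P ∧ b ∈ Q) ∨ (a ∈ Q ∧ b ∈ P) →
      ‖a - b‖ ∈ image2 (fun p q => ‖p - q‖) P Q := by
    rintro a b (⟨ha, hb⟩ | ⟨ha, hb⟩)
    · exact mem_image2_of_mem ha hb
    · exact norm_sub_rev a b ▸ mem_image2_of_mem hb ha
  rintro r (⟨i, j, hij, rfl⟩ | ⟨k, l, hkl, rfl⟩ | ⟨p, q, hpq, rfl⟩)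
  · exact hmem _ _ (hPQ.iterate_mem_of_odd_sub hQP hς hij)
  · exact hmem _ _ (hQP.iterate_mem_of_odd_sub hPQ hϑ hkl).symm
  · exact hmem _ _ (hPQ.iterate_mem_of_even_sub hQP hς hϑ hpq)

theorem IsCyclicPair.norm_apply_sub_le (hΞ : IsCyclicOrbitalContraction Ω Δ Ξ η)
    (h : IsCyclicPair Ω Δ Ξ P Q) (hP : IsBounded P) (hQ : IsBounded Q) {p q : X}
    (hp : p ∈ P) (hq : q ∈ Q) :
    ‖Ξ p - Ξ q‖ ≤ η * supDist P Q + (1 - η) * setDist Ω Δ := by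
  refine (hΞ.norm_sub_le p (h.subset_fst hp) q (h.subset_snd hq)).trans ?_
  gcongr
  · exact hΞ.mem_Ioo.1.le
  · exact csSup_le_csSup (bddAbove_image2_norm_sub hP hQ) (orbitalSpread_nonempty Ξ p q)
      (orbitalSpread_subset_image2 h.mapsTo_fst h.mapsTo_snd hp hq)

theorem IsCyclicPair.supDist_le (hΞ : IsCyclicOrbitalContraction Ω Δ Ξ η)
    (h : IsCyclicPair Ω Δ Ξ P Q) (hP : IsBounded P) (hQ : IsBounded Q) {P' Q' : Set X}
    (hP' : P' ⊆ closure (Ξ '' Q)) (hQ' : Q' ⊆ closure (Ξ '' P)) :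
    supDist P' Q' ≤ η * supDist P Q + (1 - η) * setDist Ω Δ := by
  have hc : ∀ a ∈ closure (Ξ '' Q), ∀ b ∈ closure (Ξ '' P),
      ‖a - b‖ ≤ η * supDist P Q + (1 - η) * setDist Ω Δ := by
    intro a ha b hb
    rw [← mem_Iic, ← closure_Iic]
    refine map_mem_closure₂ (f := fun a b : X => ‖a - b‖) (by fun_prop) ha hb ?_
    rintro _ ⟨q, hq, rfl⟩ _ ⟨p, hp, rfl⟩
    exact norm_sub_rev (Ξ p) (Ξ q) ▸ h.norm_apply_sub_le hΞ hP hQ hp hq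
  have hnonneg : 0 ≤ η * supDist P Q + (1 - η) * setDist Ω Δ := by
    obtain ⟨hη0, hη1⟩ := hΞ.mem_Ioo
    have hsup : 0 ≤ supDist P Q :=
      Real.sSup_nonneg (forall_mem_image2.2 fun _ _ _ _ => norm_nonneg _)
    exact add_nonneg (mul_nonneg hη0.le hsup) (mul_nonneg (by linarith) (setDist_nonneg Ω Δ))
  exact Real.sSup_le (forall_mem_image2.2 fun a ha b hb => hc a (hP' ha) b (hQ' hb)) hnonneg

end Contraction

theorem exists_le_add_of_le_mul_add {u : ℕ → ℝ} {η d ε : ℝ} (hη₀ : 0 ≤ η) (hη₁ : η < 1)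
    (hu : ∀ n, u (n + 1) ≤ η * u n + (1 - η) * d) (hε : 0 < ε) : ∃ n, u n ≤ d + ε := by
  have hgeom : ∀ n, u n - d ≤ η ^ n * (u 0 - d) := by
    intro n
    induction n with
    | zero => simp
    | succ n ih =>
      calc u (n + 1) - d ≤ η * (u n - d) := by linarith [hu n]
        _ ≤ η * (η ^ n * (u 0 - d)) := by gcongr
        _ = η ^ (n + 1) * (u 0 - d) := by ring
  have hlim : Tendsto (fun n => η ^ n * (u 0 - d)) atTop (nhds 0) := by
    simpa using (tendsto_pow_atTop_nhds_zero_of_lt_one hη₀ hη₁).mul_const (u 0 - d)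
  obtain ⟨n, hn⟩ := (hlim.eventually (ge_mem_nhds hε)).exists
  exact ⟨n, by linarith [hgeom n]⟩

theorem exists_forall_norm_sub_lt_of_two_mul_le_norm_add (X : Type*) [NormedAddCommGroup X]
    [NormedSpace ℝ X] [UniformConvexSpace X] (d : ℝ) {ε : ℝ} (hε : 0 < ε) :
    ∃ γ > 0, ∀ u v : X, ‖u‖ ≤ d + γ → ‖v‖ ≤ d + γ → 2 * d ≤ ‖u + v‖ → ‖u - v‖ < ε := by
  rcases le_or_gt d 0 with hd | hd
  · refine ⟨ε / 4, by positivity, fun u v hu hv _ => ?_⟩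
    linarith [norm_sub_le u v]
  obtain ⟨δ, hδ, hUC⟩ := exists_forall_closed_ball_dist_add_le_two_sub X
    (show 0 < ε / (d + 1) by positivity)
  refine ⟨min 1 (δ * d / 4), by positivity, fun u v hu hv huv => ?_⟩
  set γ := min 1 (δ * d / 4)
  have hγ₁ : γ ≤ 1 := min_le_left _ _
  have hγδ : γ ≤ δ * d / 4 := min_le_right _ _
  have hγ₀ : 0 < γ := by positivity
  have hr : 0 < d + γ := by positivity
  by_contra! hε'
  -- on the unit ball after rescaling by `d + γ`: `‖u + v‖ ≤ (2 - δ) (d + γ) < 2 d` as `γ ≤ δ d / 4`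
  have hscale : ∀ w : X, ‖(d + γ)⁻¹ • w‖ = ‖w‖ / (d + γ) := fun w => by
    rw [norm_smul, Real.norm_of_nonneg (inv_nonneg.2 hr.le), inv_mul_eq_div]
  have key := hUC (x := (d + γ)⁻¹ • u) (y := (d + γ)⁻¹ • v)
    (by rwa [hscale, div_le_one hr]) (by rwa [hscale, div_le_one hr])
    (by rw [← smul_sub, hscale]; gcongr)
  rw [← smul_add, hscale, div_le_iff₀ hr] at key
  nlinarith [mul_pos hδ hd, mul_pos hδ hγ₀]

theorem Convex.cauchySeq_of_forall_norm_sub_le_add {X : Type*} [NormedAddCommGroup X]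
    [NormedSpace ℝ X] [UniformConvexSpace X] {Ω Δ : Set X} {d : ℝ} (hΩ : Convex ℝ Ω)
    (hd : ∀ a ∈ Ω, ∀ b ∈ Δ, d ≤ ‖a - b‖) {x : ℕ → X} (hx : ∀ n, x n ∈ Ω)
    (h : ∀ γ > 0, ∃ N, ∃ y ∈ Δ, ∀ n ≥ N, ‖x n - y‖ ≤ d + γ) : CauchySeq x := by
  refine Metric.cauchySeq_iff.2 fun ε hε => ?_
  obtain ⟨γ, hγ, hUC⟩ := exists_forall_norm_sub_lt_of_two_mul_le_norm_add X d hε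
  obtain ⟨N, y, hy, hN⟩ := h γ hγ
  refine ⟨N, fun m hm n hn => ?_⟩
  have hmid : d ≤ ‖(1 / 2 : ℝ) • x m + (1 / 2 : ℝ) • x n - y‖ :=
    hd _ (hΩ (hx m) (hx n) (by norm_num) (by norm_num) (by norm_num)) y hy
  have hsum : (1 / 2 : ℝ) • x m + (1 / 2 : ℝ) • x n - y =
      (1 / 2 : ℝ) • ((x m - y) + (x n - y)) := by
    module
  rw [hsum, norm_smul, Real.norm_of_nonneg (by norm_num)] at hmid
  rw [dist_eq_norm, ← sub_sub_sub_cancel_right (x m) (x n) y]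
  exact hUC _ _ (hN m hm) (hN n hn) (by linarith)

namespace IsCyclicOrbitalContraction

variable {X : Type*} [NormedAddCommGroup X] {Ω Δ : Set X} {Ξ : X → X} {η : ℝ}

theorem exists_supDist_le_add (hΞ : IsCyclicOrbitalContraction Ω Δ Ξ η) {P Q : ℕ → Set X}
    (h : ∀ n, IsCyclicPair Ω Δ Ξ (P n) (Q n)) (hP : ∀ n, IsBounded (P n))
    (hQ : ∀ n, IsBounded (Q n)) (hPs : ∀ n, P (n + 1) ⊆ closure (Ξ '' Q n))
    (hQs : ∀ n, Q (n + 1) ⊆ closure (Ξ '' P n)) {ε : ℝ} (hε : 0 < ε) :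
    ∃ n, supDist (P n) (Q n) ≤ setDist Ω Δ + ε :=
  exists_le_add_of_le_mul_add hΞ.mem_Ioo.1.le hΞ.mem_Ioo.2
    (fun n => (h n).supDist_le hΞ (hP n) (hQ n) (hPs n) (hQs n)) hε

theorem isBounded_evenOrbit (hΞ : IsCyclicOrbitalContraction Ω Δ Ξ η) (x : X) :
    IsBounded (evenOrbit Ξ x) :=
  (hΞ.isBounded_orbit x).subset (range_subset_iff.2 fun _ => mem_range_self _)

theorem isBounded_oddOrbit (hΞ : IsCyclicOrbitalContraction Ω Δ Ξ η) (x : X) :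
    IsBounded (oddOrbit Ξ x) :=
  (hΞ.isBounded_orbit x).subset (range_subset_iff.2 fun _ => mem_range_self _)

theorem cauchySeq_iterate_two_mul [NormedSpace ℝ X] [UniformConvexSpace X]
    (hΞ : IsCyclicOrbitalContraction Ω Δ Ξ η) (hΩ : Convex ℝ Ω) {x : X} (hx : x ∈ Ω) :
    CauchySeq fun n => Ξ^[2 * n] x := by
  have hpair : ∀ n, IsCyclicPair Ω Δ Ξ (evenOrbit Ξ (Ξ^[2 * n] x)) (oddOrbit Ξ (Ξ^[2 * n] x)) :=
    fun n => isCyclicPair_orbit hΞ.mapsTo_fst hΞ.mapsTo_snd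
      (hΞ.mapsTo_fst.iterate_two_mul hΞ.mapsTo_snd n hx)
  refine hΩ.cauchySeq_of_forall_norm_sub_le_add (Δ := Δ)
    (fun a ha b hb => setDist_le_norm_sub ha hb)
    (fun n => (hpair n).subset_fst self_mem_evenOrbit) fun γ hγ => ?_
  obtain ⟨N, hN⟩ := hΞ.exists_supDist_le_add hpair (fun _ => hΞ.isBounded_evenOrbit _)
    (fun _ => hΞ.isBounded_oddOrbit _)
    (fun n => by
      rw [iterate_two_mul_succ]
      exact evenOrbit_iterate_two_subset_image_oddOrbit.trans subset_closure)
    (fun n => by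
      rw [iterate_two_mul_succ]
      exact oddOrbit_iterate_two_subset_image_evenOrbit.trans subset_closure) hγ
  refine ⟨N, _, (hpair N).subset_snd apply_mem_oddOrbit, fun n hn => ?_⟩
  exact (norm_sub_le_supDist (hΞ.isBounded_evenOrbit _) (hΞ.isBounded_oddOrbit _)
    (iterate_two_mul_mem_evenOrbit hn) apply_mem_oddOrbit).trans hN

theorem norm_sub_apply_le (hΞ : IsCyclicOrbitalContraction Ω Δ Ξ η) {x z : X} (hx : x ∈ Ω)
    (hz : z ∈ Ω) (hlim : Tendsto (fun n => Ξ^[2 * n] x) atTop (nhds z)) :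
    ‖z - Ξ z‖ ≤ setDist Ω Δ := by
  set P : ℕ → Set X := fun n => evenOrbit Ξ z ∪ evenOrbit Ξ (Ξ^[2 * n] x)
  set Q : ℕ → Set X := fun n => oddOrbit Ξ z ∪ oddOrbit Ξ (Ξ^[2 * n] x)
  have hpair : ∀ n, IsCyclicPair Ω Δ Ξ (P n) (Q n) := fun n =>
    (isCyclicPair_orbit hΞ.mapsTo_fst hΞ.mapsTo_snd hz).union
      (isCyclicPair_orbit hΞ.mapsTo_fst hΞ.mapsTo_snd
        (hΞ.mapsTo_fst.iterate_two_mul hΞ.mapsTo_snd n hx))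
  have hP : ∀ n, IsBounded (P n) := fun n =>
    (hΞ.isBounded_evenOrbit _).union (hΞ.isBounded_evenOrbit _)
  have hQ : ∀ n, IsBounded (Q n) := fun n =>
    (hΞ.isBounded_oddOrbit _).union (hΞ.isBounded_oddOrbit _)
  have hz_mem : ∀ n, z ∈ closure (evenOrbit Ξ (Ξ^[2 * n] x)) := fun n =>
    mem_closure_of_tendsto hlim
      ((eventually_ge_atTop n).mono fun _ hm => iterate_two_mul_mem_evenOrbit hm)
  have hPs : ∀ n, P (n + 1) ⊆ closure (Ξ '' Q n) := by
    intro n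
    have hx' : evenOrbit Ξ (Ξ^[2 * (n + 1)] x) ⊆ Ξ '' Q n := by
      rw [iterate_two_mul_succ, image_union]
      exact evenOrbit_iterate_two_subset_image_oddOrbit.trans subset_union_right
    have hz' : evenOrbit Ξ (Ξ^[2] z) ⊆ Ξ '' Q n := by
      rw [image_union]
      exact evenOrbit_iterate_two_subset_image_oddOrbit.trans subset_union_left
    refine union_subset (evenOrbit_subset_insert.trans (insert_subset ?_ ?_)) ?_
    · exact closure_mono hx' (hz_mem (n + 1))
    · exact hz'.trans subset_closure
    · exact hx'.trans subset_closure
  have hQs : ∀ n, Q (n + 1) ⊆ closure (Ξ '' P n) := by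
    intro n
    refine (union_subset_union oddOrbit_subset_image_evenOrbit ?_).trans
      ((image_union _ _ _).symm.subset.trans subset_closure)
    rw [iterate_two_mul_succ]
    exact oddOrbit_iterate_two_subset_image_evenOrbit
  refine le_of_forall_pos_le_add fun ε hε => ?_
  obtain ⟨n, hn⟩ := hΞ.exists_supDist_le_add hpair hP hQ hPs hQs hε
  exact (norm_sub_le_supDist (hP n) (hQ n) (mem_union_left _ self_mem_evenOrbit)
    (mem_union_left _ apply_mem_oddOrbit)).trans hn

end IsCyclicOrbitalContraction

theorem stmt4_general {X : Type*} [NormedAddCommGroup X] [NormedSpace ℝ X] [UniformConvexSpace X]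
    [CompleteSpace X] (Ω Δ : Set X) (hΩ : Ω.Nonempty)
    (hΩc : IsClosed Ω) (hΩconv : Convex ℝ Ω)
    (Ξ : X → X) (η : ℝ) (hη : η ∈ Set.Ioo (0 : ℝ) 1)
    (hcycΩ : Set.MapsTo Ξ Ω Δ) (hcycΔ : Set.MapsTo Ξ Δ Ω)
    (hbdd : ∀ x : X, Bornology.IsBounded (Set.range fun n => Ξ^[n] x))
    (hcontr : ∀ ς ∈ Ω, ∀ ϑ ∈ Δ,
      ‖Ξ ς - Ξ ϑ‖ ≤ η * sSup { r : ℝ |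
      (∃ i j : ℕ, Odd ((i : ℤ) - j) ∧ r = ‖Ξ^[i] ς - Ξ^[j] ς‖) ∨
      (∃ k l : ℕ, Odd ((k : ℤ) - l) ∧ r = ‖Ξ^[k] ϑ - Ξ^[l] ϑ‖) ∨
      (∃ p q : ℕ, Even ((p : ℤ) - q) ∧ r = ‖Ξ^[p] ς - Ξ^[q] ϑ‖) }
        + (1 - η) * sInf (Set.image2 (fun x y => ‖x - y‖) Ω Δ)) :
    ∃ ςs ∈ Ω, ‖ςs - Ξ ςs‖ = sInf (Set.image2 (fun x y => ‖x - y‖) Ω Δ) := by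
  have hΞ : IsCyclicOrbitalContraction Ω Δ Ξ η := ⟨hη, hcycΩ, hcycΔ, hbdd, hcontr⟩
  obtain ⟨x, hx⟩ := hΩ
  obtain ⟨z, hlim⟩ := cauchySeq_tendsto_of_complete (hΞ.cauchySeq_iterate_two_mul hΩconv hx)
  have hz : z ∈ Ω := hΩc.mem_of_tendsto hlim
    (Eventually.of_forall fun n => hcycΩ.iterate_two_mul hcycΔ n hx)
  exact ⟨z, hz, (hΞ.norm_sub_apply_le hx hz hlim).antisymm
    (setDist_le_norm_sub hz (hcycΩ hz))⟩

theorem stmt4 {X : Type*} [NormedAddCommGroup X] [NormedSpace ℝ X] [UniformConvexSpace X]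
    [CompleteSpace X] (Ω Δ : Set X) (hΩ : Ω.Nonempty) (hΔ : Δ.Nonempty)
    (hΩc : IsClosed Ω) (hΔc : IsClosed Δ) (hΩconv : Convex ℝ Ω) (hΔconv : Convex ℝ Δ)
    (Ξ : X → X) (η : ℝ) (hη : η ∈ Set.Ioo (0 : ℝ) 1)
    (hcycΩ : Set.MapsTo Ξ Ω Δ) (hcycΔ : Set.MapsTo Ξ Δ Ω)
    (hbdd : ∀ x : X, Bornology.IsBounded (Set.range fun n => Ξ^[n] x))
    (hcontr : ∀ ς ∈ Ω, ∀ ϑ ∈ Δ,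
      ‖Ξ ς - Ξ ϑ‖ ≤ η * sSup { r : ℝ |
      (∃ i j : ℕ, Odd ((i : ℤ) - j) ∧ r = ‖Ξ^[i] ς - Ξ^[j] ς‖) ∨
      (∃ k l : ℕ, Odd ((k : ℤ) - l) ∧ r = ‖Ξ^[k] ϑ - Ξ^[l] ϑ‖) ∨
      (∃ p q : ℕ, Even ((p : ℤ) - q) ∧ r = ‖Ξ^[p] ς - Ξ^[q] ϑ‖) }
        + (1 - η) * sInf (Set.image2 (fun x y => ‖x - y‖) Ω Δ)) :
    ∃ ςs ∈ Ω, ‖ςs - Ξ ςs‖ = sInf (Set.image2 (fun x y => ‖x - y‖) Ω Δ) :=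
  stmt4_general Ω Δ hΩ hΩc hΩconv Ξ η hη hcycΩ hcycΔ hbdd hcontr
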